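/- arXiv:0810.1973 — 2 statements merged into one kernel-verified Lean document; each statement's English description precedes it below -/
import Mathlib

section
/- For jointly distributed finite random variables with the product test-channel structure, and disjoint nonempty index sets I and I', one has I(X_{I∪I'}; Z_{I∪I'} | Z_{(I∪I')^c}, S) = I(X_I; Z_I | Z_{(I∪I')^c}, S) + I(X_{I'}; Z_{I'} | Z_{I'^c}, S). -/
open Finset

/-- Probability that a random variable `f` (on finite sample space `Ω` with pmf `μ`)
takes the value `a`. -/
noncomputable def pr {Ω : Type} [Fintype Ω] (μ : Ω → ℝ) {A : Type} [Fintype A] [DecidableEq A]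
    (f : Ω → A) (a : A) : ℝ :=
  ∑ ω, if f ω = a then μ ω else 0

/-- Shannon entropy of a finite random variable. -/
noncomputable def ent {Ω : Type} [Fintype Ω] (μ : Ω → ℝ) {A : Type} [Fintype A] [DecidableEq A]
    (f : Ω → A) : ℝ :=
  -∑ a, pr μ f a * Real.log (pr μ f a)

/-- Conditional entropy `H(f | g)`. -/
noncomputable def condEnt {Ω : Type} [Fintype Ω] (μ : Ω → ℝ) {A B : Type}
    [Fintype A] [DecidableEq A] [Fintype B] [DecidableEq B] (f : Ω → A) (g : Ω → B) : ℝ :=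
  ent μ (fun ω => (f ω, g ω)) - ent μ g

/-- Mutual information `I(f ; g)`. -/
noncomputable def mi {Ω : Type} [Fintype Ω] (μ : Ω → ℝ) {A B : Type}
    [Fintype A] [DecidableEq A] [Fintype B] [DecidableEq B] (f : Ω → A) (g : Ω → B) : ℝ :=
  ent μ f + ent μ g - ent μ (fun ω => (f ω, g ω))

/-- Conditional mutual information `I(f ; g | h)`. -/
noncomputable def cmi {Ω : Type} [Fintype Ω] (μ : Ω → ℝ) {A B C : Type}
    [Fintype A] [DecidableEq A] [Fintype B] [DecidableEq B] [Fintype C] [DecidableEq C]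
    (f : Ω → A) (g : Ω → B) (h : Ω → C) : ℝ :=
  ent μ (fun ω => (f ω, h ω)) + ent μ (fun ω => (g ω, h ω))
    - ent μ (fun ω => (f ω, g ω, h ω)) - ent μ h

section ProductStructure

variable {M : ℕ} {𝒳 𝒵 : Fin M → Type} {𝒮 : Type}

/-- Sample space for the multiterminal setup: sources, side information, auxiliaries. -/
abbrev Samp (𝒳 𝒵 : Fin M → Type) (𝒮 : Type) := ((∀ i, 𝒳 i) × 𝒮) × (∀ i, 𝒵 i)

/-- The joint pmf `p(x_{1..M}, s) ∏ₖ qₖ(z_k | x_k)` (product test-channel structure). -/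
noncomputable def jointPMF (p : (∀ i, 𝒳 i) × 𝒮 → ℝ) (q : ∀ i, 𝒳 i → 𝒵 i → ℝ) :
    Samp 𝒳 𝒵 𝒮 → ℝ :=
  fun ω => p ω.1 * ∏ i, q i (ω.1.1 i) (ω.2 i)

/-- The tuple `X_I` of source variables indexed by `I`. -/
def XI (I : Finset (Fin M)) : Samp 𝒳 𝒵 𝒮 → ∀ i : I, 𝒳 i := fun ω i => ω.1.1 i

/-- The tuple `Z_I` of auxiliary variables indexed by `I`. -/
def ZI (I : Finset (Fin M)) : Samp 𝒳 𝒵 𝒮 → ∀ i : I, 𝒵 i := fun ω i => ω.2 i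

/-- The side information variable `S`. -/
def Sv : Samp 𝒳 𝒵 𝒮 → 𝒮 := fun ω => ω.1.2

end ProductStructure

/- ===== auxiliary machinery ===== -/
section Aux1

lemma mul_log_mul (c u v : ℝ) : c * ((u*v) * Real.log (u*v)) =
    c * ((u*v) * Real.log u) + c * ((u*v) * Real.log v) := by
  rcases eq_or_ne u 0 with h | h; · simp [h]
  rcases eq_or_ne v 0 with h' | h'; · simp [h']
  rw [Real.log_mul h h']; ring

lemma mul_log_mul' (u v : ℝ) : (u*v) * Real.log (u*v) =
    (u*v) * Real.log u + (u*v) * Real.log v := by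
  have := mul_log_mul 1 u v; simpa using this

lemma pr_comp {Ω : Type} [Fintype Ω] (μ : Ω → ℝ) {A B : Type} [Fintype A] [DecidableEq A]
    [Fintype B] [DecidableEq B] (f : Ω → A) (φ : A → B) (b : B) :
    pr μ (fun ω => φ (f ω)) b = ∑ a, if φ a = b then pr μ f a else 0 := by
  unfold pr
  have h : ∀ a : A, (if φ a = b then ∑ ω, if f ω = a then μ ω else 0 else 0)
      = ∑ ω, if f ω = a then (if φ a = b then μ ω else 0) else 0 := by
    intro a; split
    · refine Finset.sum_congr rfl fun ω _ => by simp [*]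
    · simp [*]
  simp only [h]
  rw [Finset.sum_comm]
  refine Finset.sum_congr rfl fun ω _ => ?_
  rw [Finset.sum_ite_eq Finset.univ (f ω) fun a => if φ a = b then μ ω else 0]
  simp

lemma pr_fst {Ω : Type} [Fintype Ω] (μ : Ω → ℝ) {A B : Type} [Fintype A] [DecidableEq A]
    [Fintype B] [DecidableEq B] (f : Ω → A) (g : Ω → B) (a : A) :
    pr μ f a = ∑ b, pr μ (fun ω => (f ω, g ω)) (a, b) := by
  have h := pr_comp μ (fun ω => (f ω, g ω)) Prod.fst a
  have hf : pr μ (fun ω => Prod.fst ((f ω, g ω))) a = pr μ f a := rfl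
  rw [hf] at h
  rw [h, Fintype.sum_prod_type]
  have h2 : ∀ a' : A, (∑ b, if (a', b).1 = a then pr μ (fun ω => (f ω, g ω)) (a', b) else 0)
      = if a' = a then (∑ b, pr μ (fun ω => (f ω, g ω)) (a', b)) else 0 := by
    intro a'; split <;> simp [*]
  simp only [h2]
  rw [Finset.sum_ite_eq' Finset.univ a fun a' => ∑ b, pr μ (fun ω => (f ω, g ω)) (a', b)]
  simp

lemma sum_pr_comp {Ω A D : Type} [Fintype Ω] [Fintype A] [DecidableEq A] [Fintype D]
    [DecidableEq D] (μ : Ω → ℝ) (f : Ω → A) (φ : A → D) (g : D → ℝ) :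
    ∑ d, pr μ (fun ω => φ (f ω)) d * g d = ∑ a, pr μ f a * g (φ a) := by
  simp only [pr_comp μ f φ]
  calc ∑ d, (∑ a, if φ a = d then pr μ f a else 0) * g d
      = ∑ d, ∑ a, (if φ a = d then pr μ f a * g d else 0) := by
        refine Finset.sum_congr rfl fun d _ => ?_
        rw [Finset.sum_mul]
        refine Finset.sum_congr rfl fun a _ => by split <;> simp
    _ = ∑ a, ∑ d, (if φ a = d then pr μ f a * g d else 0) := Finset.sum_comm
    _ = ∑ a, pr μ f a * g (φ a) := by
        refine Finset.sum_congr rfl fun a _ => ?_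
        rw [Finset.sum_ite_eq Finset.univ (φ a) (fun d => pr μ f a * g d)]
        simp

lemma ent_comp_inj {Ω : Type} [Fintype Ω] (μ : Ω → ℝ) {A B : Type} [Fintype A] [DecidableEq A]
    [Fintype B] [DecidableEq B] (f : Ω → A) (e : A → B) (he : Function.Injective e) :
    ent μ (fun ω => e (f ω)) = ent μ f := by
  unfold ent
  congr 1
  have key : ∀ a, pr μ (fun ω => e (f ω)) (e a) = pr μ f a := by
    intro a; unfold pr
    refine Finset.sum_congr rfl fun ω _ => by simp [he.eq_iff]
  have zero : ∀ b ∈ Finset.univ, b ∉ Finset.image e Finset.univ →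
      (fun b => pr μ (fun ω => e (f ω)) b * Real.log (pr μ (fun ω => e (f ω)) b)) b = 0 := by
    intro b _ hb
    have hz : pr μ (fun ω => e (f ω)) b = 0 := by
      unfold pr
      refine Finset.sum_eq_zero fun ω _ => ?_
      have hne : e (f ω) ≠ b := fun h => hb (Finset.mem_image.mpr ⟨f ω, Finset.mem_univ _, h⟩)
      simp [hne]
    simp [hz]
  rw [← Finset.sum_subset (Finset.subset_univ (Finset.image e Finset.univ)) zero]
  rw [Finset.sum_image (fun a _ a' _ h => he h)]
  exact Finset.sum_congr rfl fun a _ => by rw [key]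

end Aux1

section Split
variable {ι : Type} [DecidableEq ι] {T : ι → Type}

def resF {A B : Finset ι} (h : A ⊆ B) (z : ∀ i : B, T i) : ∀ i : A, T i :=
  fun i => z ⟨i.1, h i.2⟩

def unionEquiv {A B : Finset ι} (hd : Disjoint A B) :
    (∀ i : ↥(A ∪ B), T i) ≃ (∀ i : ↥A, T i) × (∀ i : ↥B, T i) where
  toFun z := (resF Finset.subset_union_left z, resF Finset.subset_union_right z)
  invFun p i := if h : i.1 ∈ A then p.1 ⟨i.1, h⟩
    else p.2 ⟨i.1, (Finset.mem_union.mp i.2).resolve_left h⟩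
  left_inv z := by
    funext i
    dsimp only [resF]
    split <;> rfl
  right_inv p := by
    refine Prod.ext ?_ ?_ <;> funext i <;> dsimp only [resF]
    · rw [dif_pos i.2]
    · rw [dif_neg (Finset.disjoint_right.mp hd i.2)]

lemma unionEquiv_symm_fst {A B : Finset ι} (hd : Disjoint A B)
    (p : (∀ i : ↥A, T i) × (∀ i : ↥B, T i)) :
    resF Finset.subset_union_left ((unionEquiv hd).symm p) = p.1 :=
  congrArg Prod.fst ((unionEquiv hd).apply_symm_apply p)

lemma unionEquiv_symm_snd {A B : Finset ι} (hd : Disjoint A B)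
    (p : (∀ i : ↥A, T i) × (∀ i : ↥B, T i)) :
    resF Finset.subset_union_right ((unionEquiv hd).symm p) = p.2 :=
  congrArg Prod.snd ((unionEquiv hd).apply_symm_apply p)

lemma resF_pair_inj {X Y : Finset ι} :
    Function.Injective (fun z : ∀ i : ↥(X ∪ Y), T i =>
      (resF Finset.subset_union_left z, resF Finset.subset_union_right z)) := by
  intro z z' h
  rw [Prod.mk.injEq] at h
  funext i
  rcases Finset.mem_union.mp i.2 with hm | hm
  · exact congrFun h.1 ⟨i.1, hm⟩
  · exact congrFun h.2 ⟨i.1, hm⟩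

lemma prod_coe_union' {A B : Finset ι} (hd : Disjoint A B) (f : ∀ i : ι, i ∈ A ∪ B → ℝ) :
    ∏ i : ↥(A ∪ B), f i.1 i.2 =
      (∏ i : ↥A, f i.1 (Finset.mem_union_left _ i.2)) *
      ∏ i : ↥B, f i.1 (Finset.mem_union_right _ i.2) := by
  classical
  set gg : ι → ℝ := fun i => if h : i ∈ A ∪ B then f i h else 1 with hgg
  have h1 : ∏ i : ↥(A ∪ B), f i.1 i.2 = ∏ i ∈ A ∪ B, gg i := by
    rw [← Finset.prod_attach (A ∪ B) gg, Finset.univ_eq_attach]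
    refine Finset.prod_congr rfl fun i _ => ?_
    rw [hgg]; dsimp only; rw [dif_pos i.2]
  have hA : ∏ i ∈ A, gg i = ∏ i : ↥A, f i.1 (Finset.mem_union_left _ i.2) := by
    rw [← Finset.prod_attach A gg, Finset.univ_eq_attach]
    refine Finset.prod_congr rfl fun i _ => ?_
    rw [hgg]; dsimp only; rw [dif_pos (Finset.mem_union_left _ i.2)]
  have hB : ∏ i ∈ B, gg i = ∏ i : ↥B, f i.1 (Finset.mem_union_right _ i.2) := by
    rw [← Finset.prod_attach B gg, Finset.univ_eq_attach]
    refine Finset.prod_congr rfl fun i _ => ?_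
    rw [hgg]; dsimp only; rw [dif_pos (Finset.mem_union_right _ i.2)]
  rw [h1, Finset.prod_union hd, hA, hB]

end Split

section L3
variable {M : ℕ} {𝒳 𝒵 : Fin M → Type} {𝒮 : Type}
  [∀ i, Fintype (𝒳 i)] [∀ i, DecidableEq (𝒳 i)]
  [∀ i, Fintype (𝒵 i)] [∀ i, DecidableEq (𝒵 i)] [Fintype 𝒮] [DecidableEq 𝒮]

/-- restriction of a full function to a finset -/
def resU (B : Finset (Fin M)) (x : ∀ i, 𝒳 i) : ∀ i : B, 𝒳 i := fun i => x i.1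

/-- the product channel weight on a finset -/
noncomputable def Q (q : ∀ i, 𝒳 i → 𝒵 i → ℝ) (B : Finset (Fin M))
    (d : ∀ i : B, 𝒳 i) (δ : ∀ i : B, 𝒵 i) : ℝ :=
  ∏ i : B, q i.1 (d i) (δ i)

lemma sum_Q_one (q : ∀ i, 𝒳 i → 𝒵 i → ℝ) (hq1 : ∀ i x, ∑ z, q i x z = 1)
    (B : Finset (Fin M)) (d : ∀ i : B, 𝒳 i) : ∑ δ : ∀ i : B, 𝒵 i, Q q B d δ = 1 := by
  unfold Q
  rw [← Fintype.prod_sum (κ := fun i : B => 𝒵 i.1) (fun i z => q i.1 (d i) z)]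
  simp [hq1]

lemma sum_z (q : ∀ i, 𝒳 i → 𝒵 i → ℝ) (hq1 : ∀ i x, ∑ z, q i x z = 1)
    (x : ∀ i, 𝒳 i) (B : Finset (Fin M)) (β : ∀ i : B, 𝒵 i) :
    (∑ z : ∀ i, 𝒵 i, if (fun i : B => z i.1) = β then ∏ i, q i (x i) (z i) else 0)
      = Q q B (resU B x) β := by
  classical
  rw [← Equiv.sum_comp (Equiv.piEquivPiSubtypeProd (· ∈ B) 𝒵).symm
    (fun z => if (fun i : B => z i.1) = β then ∏ i, q i (x i) (z i) else 0)]
  rw [Fintype.sum_prod_type]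
  have hres : ∀ (zB : ∀ i : {j // j ∈ B}, 𝒵 i) (zR : ∀ i : {j // ¬ j ∈ B}, 𝒵 i),
      (fun i : B => (Equiv.piEquivPiSubtypeProd (· ∈ B) 𝒵).symm (zB, zR) i.1) = zB := by
    intro zB zR; funext i
    simp only [Equiv.piEquivPiSubtypeProd_symm_apply]
    rw [dif_pos i.2]
  have hprod : ∀ (zB : ∀ i : {j // j ∈ B}, 𝒵 i) (zR : ∀ i : {j // ¬ j ∈ B}, 𝒵 i),
      (∏ i, q i (x i) ((Equiv.piEquivPiSubtypeProd (· ∈ B) 𝒵).symm (zB, zR) i))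
        = (∏ i : {j // j ∈ B}, q i.1 (x i.1) (zB i)) *
          ∏ i : {j // ¬ j ∈ B}, q i.1 (x i.1) (zR i) := by
    intro zB zR
    rw [← Fintype.prod_subtype_mul_prod_subtype (· ∈ B)
      (fun i => q i (x i) ((Equiv.piEquivPiSubtypeProd (· ∈ B) 𝒵).symm (zB, zR) i))]
    congr 1
    · refine Finset.prod_congr (by ext i; simp) fun i _ => ?_
      simp only [Equiv.piEquivPiSubtypeProd_symm_apply]
      rw [dif_pos i.2]
    · refine Finset.prod_congr (by ext i; simp) fun i _ => ?_
      simp only [Equiv.piEquivPiSubtypeProd_symm_apply]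
      rw [dif_neg i.2]
  calc (∑ zB : ∀ i : {j // j ∈ B}, 𝒵 i, ∑ zR : ∀ i : {j // ¬ j ∈ B}, 𝒵 i,
        if (fun i : B => (Equiv.piEquivPiSubtypeProd (· ∈ B) 𝒵).symm (zB, zR) i.1) = β
        then ∏ i, q i (x i) ((Equiv.piEquivPiSubtypeProd (· ∈ B) 𝒵).symm (zB, zR) i) else 0)
      = ∑ zB : ∀ i : {j // j ∈ B}, 𝒵 i, ∑ zR : ∀ i : {j // ¬ j ∈ B}, 𝒵 i,
        if zB = β then (∏ i : {j // j ∈ B}, q i.1 (x i.1) (zB i)) *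
          ∏ i : {j // ¬ j ∈ B}, q i.1 (x i.1) (zR i) else 0 := by
        refine Finset.sum_congr rfl fun zB _ => Finset.sum_congr rfl fun zR _ => ?_
        rw [hres, hprod]
    _ = Q q B (resU B x) β := by
        rw [Finset.sum_comm]
        have : ∀ zR : ∀ i : {j // ¬ j ∈ B}, 𝒵 i,
            (∑ zB : ∀ i : {j // j ∈ B}, 𝒵 i, if zB = β
              then (∏ i : {j // j ∈ B}, q i.1 (x i.1) (zB i)) *
                ∏ i : {j // ¬ j ∈ B}, q i.1 (x i.1) (zR i) else 0)
            = (∏ i : {j // j ∈ B}, q i.1 (x i.1) (β i)) *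
                ∏ i : {j // ¬ j ∈ B}, q i.1 (x i.1) (zR i) := by
          intro zR
          rw [Finset.sum_ite_eq' Finset.univ β]
          simp
        simp only [this]
        rw [← Finset.mul_sum]
        rw [← Fintype.prod_sum (κ := fun i : {j // ¬ j ∈ B} => 𝒵 i.1)
          (fun i z => q i.1 (x i.1) z)]
        simp only [hq1]
        simp [Q, resU]

lemma prW (p : (∀ i, 𝒳 i) × 𝒮 → ℝ) (q : ∀ i, 𝒳 i → 𝒵 i → ℝ)
    (hq1 : ∀ i x, ∑ z, q i x z = 1) (A B : Finset (Fin M))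
    (a : ∀ i : A, 𝒳 i) (β : ∀ i : B, 𝒵 i) (s : 𝒮) :
    pr (jointPMF p q) (fun ω => (XI A ω, ZI B ω, Sv ω)) (a, β, s)
      = ∑ x : ∀ i, 𝒳 i, if resU A x = a then p (x, s) * Q q B (resU B x) β else 0 := by
  unfold pr jointPMF
  rw [Fintype.sum_prod_type, Fintype.sum_prod_type]
  refine Finset.sum_congr rfl fun x _ => ?_
  have step : ∀ s' : 𝒮,
      (∑ z : ∀ i, 𝒵 i, if ((XI A (((x, s'), z) : Samp 𝒳 𝒵 𝒮), ZI B ((x, s'), z),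
          Sv ((x, s'), z)) = (a, β, s))
        then p (x, s') * ∏ i, q i (x i) (z i) else 0)
      = if (resU A x = a ∧ s' = s) then p (x, s') * Q q B (resU B x) β else 0 := by
    intro s'
    by_cases hP : resU A x = a
    · by_cases hS : s' = s
      · subst hS
        rw [if_pos ⟨hP, rfl⟩]
        rw [← sum_z q hq1 x B β, Finset.mul_sum]
        refine Finset.sum_congr rfl fun z _ => ?_
        have hcond : ((XI A ((x, s'), z), ZI B ((x, s'), z), Sv ((x, s'), z))
            = (a, β, s')) ↔ ((fun i : B => z i.1) = β) := by
          simp only [XI, ZI, Sv, Prod.mk.injEq]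
          exact ⟨fun h => h.2.1, fun h => ⟨hP, h, trivial⟩⟩
        rw [if_congr hcond rfl rfl]
        split <;> simp
      · rw [if_neg (fun h => hS h.2)]
        refine Finset.sum_eq_zero fun z _ => ?_
        simp only [XI, ZI, Sv, Prod.mk.injEq]
        rw [if_neg (fun h => hS h.2.2)]
    · rw [if_neg (fun h => hP h.1)]
      refine Finset.sum_eq_zero fun z _ => ?_
      simp only [XI, ZI, Sv, Prod.mk.injEq]
      exact if_neg (fun h => hP h.1)
  simp only [step]
  by_cases hP : resU A x = a
  · simp only [hP, true_and]
    rw [Finset.sum_ite_eq' Finset.univ s fun s' => p (x, s') * Q q B (resU B x) β]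
    simp
  · simp [hP]

end L3

section L4
variable {M : ℕ} {𝒳 𝒵 : Fin M → Type} {𝒮 : Type}
  [∀ i, Fintype (𝒳 i)] [∀ i, DecidableEq (𝒳 i)]
  [∀ i, Fintype (𝒵 i)] [∀ i, DecidableEq (𝒵 i)] [Fintype 𝒮] [DecidableEq 𝒮]

lemma Q_union (q : ∀ i, 𝒳 i → 𝒵 i → ℝ) {B D : Finset (Fin M)} (hd : Disjoint B D)
    (d : ∀ i : ↥(B ∪ D), 𝒳 i) (δ : ∀ i : ↥(B ∪ D), 𝒵 i) :
    Q q (B ∪ D) d δ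
      = Q q B (resF Finset.subset_union_left d) (resF Finset.subset_union_left δ) *
        Q q D (resF Finset.subset_union_right d) (resF Finset.subset_union_right δ) :=
  prod_coe_union' hd (fun i h => q i (d ⟨i, h⟩) (δ ⟨i, h⟩))

/-- `-H(Z_D | X_D) = ∑ pr(X_D = d) Q(δ|d) log Q(δ|d)`, negated entropy of channel on `D`. -/
noncomputable def FD (p : (∀ i, 𝒳 i) × 𝒮 → ℝ) (q : ∀ i, 𝒳 i → 𝒵 i → ℝ)
    (D : Finset (Fin M)) : ℝ :=
  -∑ d : ∀ i : D, 𝒳 i, ∑ δ : ∀ i : D, 𝒵 i,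
    pr (jointPMF p q) (XI D) d * (Q q D d δ * Real.log (Q q D d δ))

lemma step_lemma (p : (∀ i, 𝒳 i) × 𝒮 → ℝ) (q : ∀ i, 𝒳 i → 𝒵 i → ℝ)
    (hq1 : ∀ i x, ∑ z, q i x z = 1) {A B D : Finset (Fin M)}
    (hDA : D ⊆ A) (hBD : Disjoint B D) :
    ent (jointPMF p q) (fun ω => (XI A ω, ZI (B ∪ D) ω, Sv ω))
      = FD p q D + ent (jointPMF p q) (fun ω => (XI A ω, ZI B ω, Sv ω)) := by
  classical
  set μ := jointPMF p q with hμ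
  set v : (∀ i : A, 𝒳 i) → (∀ i : B, 𝒵 i) → 𝒮 → ℝ :=
    fun a β s => pr μ (fun ω => (XI A ω, ZI B ω, Sv ω)) (a, β, s) with hv
  set u : (∀ i : A, 𝒳 i) → (∀ i : D, 𝒵 i) → ℝ :=
    fun a δ => Q q D (resF hDA a) δ with hu
  have key : ∀ (a : ∀ i : A, 𝒳 i) (β : ∀ i : B, 𝒵 i) (δ : ∀ i : D, 𝒵 i) (s : 𝒮),
      pr μ (fun ω => (XI A ω, ZI (B ∪ D) ω, Sv ω)) (a, (unionEquiv hBD).symm (β, δ), s)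
        = u a δ * v a β s := by
    intro a β δ s
    rw [hv, hu, hμ]; dsimp only
    rw [prW p q hq1, prW p q hq1, Finset.mul_sum]
    refine Finset.sum_congr rfl fun x _ => ?_
    by_cases hx : resU A x = a
    · rw [if_pos hx, if_pos hx]
      rw [Q_union q hBD, unionEquiv_symm_fst, unionEquiv_symm_snd]
      have h1 : resF (Finset.subset_union_left) (resU (B ∪ D) x) = resU B x := rfl
      have h2 : resF (Finset.subset_union_right) (resU (B ∪ D) x) = resU D x := rfl
      rw [h1, h2]
      have h3 : resU D x = resF hDA a := by rw [← hx]; rfl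
      rw [h3]; dsimp only; ring
    · rw [if_neg hx, if_neg hx, mul_zero]
  -- entropy of the bigger variable as a quadruple sum
  have hW' : ent μ (fun ω => (XI A ω, ZI (B ∪ D) ω, Sv ω))
      = -∑ a, ∑ β, ∑ δ, ∑ s, (u a δ * v a β s) * Real.log (u a δ * v a β s) := by
    unfold ent
    congr 1
    rw [Fintype.sum_prod_type]
    refine Finset.sum_congr rfl fun a _ => ?_
    rw [Fintype.sum_prod_type]
    rw [← Equiv.sum_comp ((unionEquiv hBD).symm :
        ((∀ i : B, 𝒵 i) × (∀ i : D, 𝒵 i)) ≃ (∀ i : ↥(B ∪ D), 𝒵 i))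
      (fun γ => ∑ s, pr μ (fun ω => (XI A ω, ZI (B ∪ D) ω, Sv ω)) (a, γ, s) *
        Real.log (pr μ (fun ω => (XI A ω, ZI (B ∪ D) ω, Sv ω)) (a, γ, s)))]
    rw [Fintype.sum_prod_type]
    refine Finset.sum_congr rfl fun β _ => Finset.sum_congr rfl fun δ _ =>
      Finset.sum_congr rfl fun s _ => ?_
    rw [key]
  -- marginal over (β, s)
  have hmarg : ∀ a, ∑ β, ∑ s, v a β s = pr μ (XI A) a := by
    intro a
    have h := pr_fst μ (XI A) (fun ω => (ZI B ω, Sv ω)) a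
    rw [h, Fintype.sum_prod_type]
  -- the two pieces
  have split1 : ∀ a β δ s, (u a δ * v a β s) * Real.log (u a δ * v a β s)
      = (u a δ * v a β s) * Real.log (u a δ) + (u a δ * v a β s) * Real.log (v a β s) :=
    fun a β δ s => mul_log_mul' _ _
  rw [hW']
  have hsum : (∑ a, ∑ β, ∑ δ, ∑ s, (u a δ * v a β s) * Real.log (u a δ * v a β s))
      = (∑ a, ∑ β, ∑ δ, ∑ s, (u a δ * v a β s) * Real.log (u a δ))
        + (∑ a, ∑ β, ∑ δ, ∑ s, (u a δ * v a β s) * Real.log (v a β s)) := by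
    simp only [split1, Finset.sum_add_distrib]
  rw [hsum]
  -- second piece is ent of the smaller variable
  have hent2 : (∑ a, ∑ β, ∑ δ, ∑ s, (u a δ * v a β s) * Real.log (v a β s))
      = ∑ a, ∑ β, ∑ s, v a β s * Real.log (v a β s) := by
    refine Finset.sum_congr rfl fun a _ => Finset.sum_congr rfl fun β _ => ?_
    rw [Finset.sum_comm]
    refine Finset.sum_congr rfl fun s _ => ?_
    have : ∀ δ, (u a δ * v a β s) * Real.log (v a β s)
        = u a δ * (v a β s * Real.log (v a β s)) := fun δ => by ring
    simp only [this]
    rw [← Finset.sum_mul, hu]; dsimp only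
    rw [sum_Q_one q hq1, one_mul]
  have hent2' : ent μ (fun ω => (XI A ω, ZI B ω, Sv ω))
      = -∑ a, ∑ β, ∑ s, v a β s * Real.log (v a β s) := by
    unfold ent
    congr 1
    rw [Fintype.sum_prod_type]
    refine Finset.sum_congr rfl fun a _ => ?_
    rw [Fintype.sum_prod_type]
  -- first piece is FD
  have hent1 : (∑ a, ∑ β, ∑ δ, ∑ s, (u a δ * v a β s) * Real.log (u a δ))
      = ∑ a, pr μ (XI A) a * ∑ δ, Q q D (resF hDA a) δ * Real.log (Q q D (resF hDA a) δ) := by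
    refine Finset.sum_congr rfl fun a _ => ?_
    have h1 : ∀ β, (∑ δ, ∑ s, (u a δ * v a β s) * Real.log (u a δ))
        = ∑ δ, (u a δ * Real.log (u a δ)) * ∑ s, v a β s := by
      intro β
      refine Finset.sum_congr rfl fun δ _ => ?_
      rw [Finset.mul_sum]
      refine Finset.sum_congr rfl fun s _ => by ring
    simp only [h1]
    rw [Finset.sum_comm]
    have h2 : ∀ δ, (∑ β, (u a δ * Real.log (u a δ)) * ∑ s, v a β s)
        = (u a δ * Real.log (u a δ)) * pr μ (XI A) a := by
      intro δ
      rw [← Finset.mul_sum]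
      congr 1
      exact hmarg a
    simp only [h2]
    rw [hu]; dsimp only
    rw [Finset.mul_sum]
    exact Finset.sum_congr rfl fun δ _ => by ring
  have hFD : FD p q D
      = -∑ a, pr μ (XI A) a * ∑ δ, Q q D (resF hDA a) δ * Real.log (Q q D (resF hDA a) δ) := by
    unfold FD
    rw [← hμ]
    congr 1
    have hXD : XI (𝒳 := 𝒳) (𝒵 := 𝒵) (𝒮 := 𝒮) D = fun ω => resF hDA (XI A ω) := rfl
    calc ∑ d, ∑ δ, pr μ (XI D) d * (Q q D d δ * Real.log (Q q D d δ))
        = ∑ d, pr μ (fun ω => resF hDA (XI A ω)) d *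
            ∑ δ, Q q D d δ * Real.log (Q q D d δ) := by
          refine Finset.sum_congr rfl fun d _ => ?_
          rw [Finset.mul_sum, hXD]
      _ = ∑ a, pr μ (XI A) a *
            ∑ δ, Q q D (resF hDA a) δ * Real.log (Q q D (resF hDA a) δ) :=
          sum_pr_comp μ (XI A) (resF hDA)
            (fun d => ∑ δ, Q q D d δ * Real.log (Q q D d δ))
  rw [hent1, hent2, hFD, hent2']
  ring
lemma FD_union (p : (∀ i, 𝒳 i) × 𝒮 → ℝ) (q : ∀ i, 𝒳 i → 𝒵 i → ℝ)
    (hq1 : ∀ i x, ∑ z, q i x z = 1) {A B : Finset (Fin M)} (hd : Disjoint A B) :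
    FD p q (A ∪ B) = FD p q A + FD p q B := by
  classical
  set μ := jointPMF p q with hμ
  have h1 : ∀ d : ∀ i : ↥(A ∪ B), 𝒳 i,
      (∑ δ : ∀ i : ↥(A ∪ B), 𝒵 i,
        pr μ (XI (A ∪ B)) d * (Q q (A ∪ B) d δ * Real.log (Q q (A ∪ B) d δ)))
      = ∑ δA : ∀ i : ↥A, 𝒵 i, ∑ δB : ∀ i : ↥B, 𝒵 i,
          pr μ (XI (A ∪ B)) d *
            ((Q q A (resF Finset.subset_union_left d) δA *
              Q q B (resF Finset.subset_union_right d) δB) *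
             Real.log (Q q A (resF Finset.subset_union_left d) δA *
              Q q B (resF Finset.subset_union_right d) δB)) := by
    intro d
    rw [← Equiv.sum_comp ((unionEquiv hd).symm :
        ((∀ i : ↥A, 𝒵 i) × (∀ i : ↥B, 𝒵 i)) ≃ (∀ i : ↥(A ∪ B), 𝒵 i))
      (fun δ => pr μ (XI (A ∪ B)) d * (Q q (A ∪ B) d δ * Real.log (Q q (A ∪ B) d δ)))]
    rw [Fintype.sum_prod_type]
    refine Finset.sum_congr rfl fun δA _ => Finset.sum_congr rfl fun δB _ => ?_
    rw [Q_union q hd, unionEquiv_symm_fst, unionEquiv_symm_snd]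
  have hsplitA : ∀ d : ∀ i : ↥(A ∪ B), 𝒳 i,
      (∑ δA : ∀ i : ↥A, 𝒵 i, ∑ δB : ∀ i : ↥B, 𝒵 i,
        pr μ (XI (A ∪ B)) d *
          ((Q q A (resF Finset.subset_union_left d) δA *
            Q q B (resF Finset.subset_union_right d) δB) *
           Real.log (Q q A (resF Finset.subset_union_left d) δA)))
      = pr μ (XI (A ∪ B)) d * ∑ δA : ∀ i : ↥A, 𝒵 i,
          Q q A (resF Finset.subset_union_left d) δA *
            Real.log (Q q A (resF Finset.subset_union_left d) δA) := by
    intro d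
    rw [Finset.mul_sum]
    refine Finset.sum_congr rfl fun δA _ => ?_
    have : ∀ δB, pr μ (XI (A ∪ B)) d *
        ((Q q A (resF Finset.subset_union_left d) δA *
          Q q B (resF Finset.subset_union_right d) δB) *
         Real.log (Q q A (resF Finset.subset_union_left d) δA))
        = Q q B (resF Finset.subset_union_right d) δB *
            (pr μ (XI (A ∪ B)) d * (Q q A (resF Finset.subset_union_left d) δA *
              Real.log (Q q A (resF Finset.subset_union_left d) δA))) := fun δB => by ring
    simp only [this]
    rw [← Finset.sum_mul, sum_Q_one q hq1, one_mul]
  have hsplitB : ∀ d : ∀ i : ↥(A ∪ B), 𝒳 i,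
      (∑ δA : ∀ i : ↥A, 𝒵 i, ∑ δB : ∀ i : ↥B, 𝒵 i,
        pr μ (XI (A ∪ B)) d *
          ((Q q A (resF Finset.subset_union_left d) δA *
            Q q B (resF Finset.subset_union_right d) δB) *
           Real.log (Q q B (resF Finset.subset_union_right d) δB)))
      = pr μ (XI (A ∪ B)) d * ∑ δB : ∀ i : ↥B, 𝒵 i,
          Q q B (resF Finset.subset_union_right d) δB *
            Real.log (Q q B (resF Finset.subset_union_right d) δB) := by
    intro d
    rw [Finset.mul_sum, Finset.sum_comm]
    refine Finset.sum_congr rfl fun δB _ => ?_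
    have : ∀ δA, pr μ (XI (A ∪ B)) d *
        ((Q q A (resF Finset.subset_union_left d) δA *
          Q q B (resF Finset.subset_union_right d) δB) *
         Real.log (Q q B (resF Finset.subset_union_right d) δB))
        = Q q A (resF Finset.subset_union_left d) δA *
            (pr μ (XI (A ∪ B)) d * (Q q B (resF Finset.subset_union_right d) δB *
              Real.log (Q q B (resF Finset.subset_union_right d) δB))) := fun δA => by ring
    simp only [this]
    rw [← Finset.sum_mul, sum_Q_one q hq1, one_mul]
  have hmargA : (∑ d : ∀ i : ↥(A ∪ B), 𝒳 i, pr μ (XI (A ∪ B)) d *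
        ∑ δA : ∀ i : ↥A, 𝒵 i, Q q A (resF Finset.subset_union_left d) δA *
          Real.log (Q q A (resF Finset.subset_union_left d) δA))
      = ∑ a : ∀ i : ↥A, 𝒳 i, pr μ (XI A) a *
          ∑ δA : ∀ i : ↥A, 𝒵 i, Q q A a δA * Real.log (Q q A a δA) := by
    have hXA : (fun ω : Samp 𝒳 𝒵 𝒮 => resF (T := 𝒳) (Finset.subset_union_left (s₂ := B))
        (XI (A ∪ B) ω)) = XI A := rfl
    have h := sum_pr_comp μ (XI (A ∪ B)) (resF (T := 𝒳) Finset.subset_union_left)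
      (fun a => ∑ δA : ∀ i : ↥A, 𝒵 i, Q q A a δA * Real.log (Q q A a δA))
    rw [hXA] at h
    exact h.symm
  have hmargB : (∑ d : ∀ i : ↥(A ∪ B), 𝒳 i, pr μ (XI (A ∪ B)) d *
        ∑ δB : ∀ i : ↥B, 𝒵 i, Q q B (resF Finset.subset_union_right d) δB *
          Real.log (Q q B (resF Finset.subset_union_right d) δB))
      = ∑ b : ∀ i : ↥B, 𝒳 i, pr μ (XI B) b *
          ∑ δB : ∀ i : ↥B, 𝒵 i, Q q B b δB * Real.log (Q q B b δB) := by
    have hXB : (fun ω : Samp 𝒳 𝒵 𝒮 => resF (T := 𝒳) (Finset.subset_union_right (s₁ := A))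
        (XI (A ∪ B) ω)) = XI B := rfl
    have h := sum_pr_comp μ (XI (A ∪ B)) (resF (T := 𝒳) Finset.subset_union_right)
      (fun b => ∑ δB : ∀ i : ↥B, 𝒵 i, Q q B b δB * Real.log (Q q B b δB))
    rw [hXB] at h
    exact h.symm
  have hun : FD p q (A ∪ B)
      = -((∑ d : ∀ i : ↥(A ∪ B), 𝒳 i, pr μ (XI (A ∪ B)) d *
          ∑ δA : ∀ i : ↥A, 𝒵 i, Q q A (resF Finset.subset_union_left d) δA *
            Real.log (Q q A (resF Finset.subset_union_left d) δA))
        + ∑ d : ∀ i : ↥(A ∪ B), 𝒳 i, pr μ (XI (A ∪ B)) d *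
          ∑ δB : ∀ i : ↥B, 𝒵 i, Q q B (resF Finset.subset_union_right d) δB *
            Real.log (Q q B (resF Finset.subset_union_right d) δB)) := by
    unfold FD
    rw [← hμ, ← Finset.sum_add_distrib]
    congr 1
    refine Finset.sum_congr rfl fun d _ => ?_
    rw [h1, ← hsplitA, ← hsplitB, ← Finset.sum_add_distrib]
    refine Finset.sum_congr rfl fun δA _ => ?_
    rw [← Finset.sum_add_distrib]
    refine Finset.sum_congr rfl fun δB _ => ?_
    exact mul_log_mul _ _ _
  have hFDA : FD p q A = -∑ a : ∀ i : ↥A, 𝒳 i, pr μ (XI A) a *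
      ∑ δA : ∀ i : ↥A, 𝒵 i, Q q A a δA * Real.log (Q q A a δA) := by
    unfold FD
    rw [← hμ]
    congr 1
    exact Finset.sum_congr rfl fun a _ => (Finset.mul_sum _ _ _).symm
  have hFDB : FD p q B = -∑ b : ∀ i : ↥B, 𝒳 i, pr μ (XI B) b *
      ∑ δB : ∀ i : ↥B, 𝒵 i, Q q B b δB * Real.log (Q q B b δB) := by
    unfold FD
    rw [← hμ]
    congr 1
    exact Finset.sum_congr rfl fun b _ => (Finset.mul_sum _ _ _).symm
  rw [hun, hmargA, hmargB, hFDA, hFDB]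
  ring

end L4

section Merge
variable {M : ℕ} {𝒳 𝒵 : Fin M → Type} {𝒮 : Type}
  [∀ i, Fintype (𝒳 i)] [∀ i, DecidableEq (𝒳 i)]
  [∀ i, Fintype (𝒵 i)] [∀ i, DecidableEq (𝒵 i)] [Fintype 𝒮] [DecidableEq 𝒮]

lemma e0_inj (X Y : Finset (Fin M)) :
    Function.Injective (fun v : (∀ i : ↥(X ∪ Y), 𝒵 i) × 𝒮 =>
      (resF Finset.subset_union_left v.1, (resF Finset.subset_union_right v.1, v.2))) := by
  rintro ⟨z, s⟩ ⟨z', s'⟩ h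
  simp only [Prod.mk.injEq] at h
  obtain ⟨h1, h2, h3⟩ := h
  have hz : z = z' := resF_pair_inj (by rw [Prod.mk.injEq]; exact ⟨h1, h2⟩)
  rw [hz, h3]

lemma ent_mergeZ (μ : Samp 𝒳 𝒵 𝒮 → ℝ) (X Y : Finset (Fin M)) :
    ent μ (fun ω => (ZI X ω, (ZI Y ω, Sv ω)))
      = ent μ (fun ω => (ZI (X ∪ Y) ω, Sv ω)) :=
  ent_comp_inj μ (fun ω => (ZI (X ∪ Y) ω, Sv ω))
    (fun v => (resF Finset.subset_union_left v.1,
      (resF Finset.subset_union_right v.1, v.2))) (e0_inj X Y)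

lemma ent_mergeXZ (μ : Samp 𝒳 𝒵 𝒮 → ℝ) (A X Y : Finset (Fin M)) :
    ent μ (fun ω => (XI A ω, (ZI X ω, (ZI Y ω, Sv ω))))
      = ent μ (fun ω => (XI A ω, (ZI (X ∪ Y) ω, Sv ω))) := by
  refine ent_comp_inj μ (fun ω => (XI A ω, (ZI (X ∪ Y) ω, Sv ω)))
    (fun v => (v.1, (resF Finset.subset_union_left v.2.1,
      (resF Finset.subset_union_right v.2.1, v.2.2)))) ?_
  rintro ⟨x, z, s⟩ ⟨x', z', s'⟩ h
  simp only [Prod.mk.injEq] at h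
  obtain ⟨h0, h1, h2, h3⟩ := h
  have hz : z = z' := resF_pair_inj (by rw [Prod.mk.injEq]; exact ⟨h1, h2⟩)
  rw [h0, hz, h3]

end Merge

section Statement

variable {M : ℕ} {𝒳 𝒵 : Fin M → Type} {𝒮 : Type}
  [∀ i, Fintype (𝒳 i)] [∀ i, DecidableEq (𝒳 i)]
  [∀ i, Fintype (𝒵 i)] [∀ i, DecidableEq (𝒵 i)] [Fintype 𝒮] [DecidableEq 𝒮]

/-- Splitting identity (Lemma A.2 of the paper): for disjoint nonempty `I, I'`,
`I(X_{I∪I'}; Z_{I∪I'} | Z_{(I∪I')ᶜ}, S) = I(X_I; Z_I | Z_{(I∪I')ᶜ}, S) + I(X_{I'}; Z_{I'} | Z_{I'ᶜ}, S)`. -/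
theorem stmt3 (p : (∀ i, 𝒳 i) × 𝒮 → ℝ) (q : ∀ i, 𝒳 i → 𝒵 i → ℝ)
    (hp0 : ∀ a, 0 ≤ p a) (hp1 : ∑ a, p a = 1)
    (hq0 : ∀ i x z, 0 ≤ q i x z) (hq1 : ∀ i x, ∑ z, q i x z = 1)
    (I I' : Finset (Fin M)) (hI : I.Nonempty) (hI' : I'.Nonempty) (hdisj : Disjoint I I') :
    cmi (jointPMF p q) (XI (I ∪ I')) (ZI (I ∪ I')) (fun ω => (ZI (I ∪ I')ᶜ ω, Sv ω)) =
      cmi (jointPMF p q) (XI I) (ZI I) (fun ω => (ZI (I ∪ I')ᶜ ω, Sv ω)) +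
      cmi (jointPMF p q) (XI I') (ZI I') (fun ω => (ZI I'ᶜ ω, Sv ω)) := by
  classical
  have hK : I'ᶜ = I ∪ (I ∪ I')ᶜ := by
    ext x
    simp only [Finset.mem_compl, Finset.mem_union]
    constructor
    · intro h
      by_cases hx : x ∈ I
      · exact Or.inl hx
      · exact Or.inr (by push_neg; exact ⟨hx, h⟩)
    · rintro (h | h)
      · exact Finset.disjoint_left.mp hdisj h
      · push_neg at h; exact h.2
  rw [hK]
  simp only [cmi]
  rw [ent_mergeZ (jointPMF p q) (I ∪ I') (I ∪ I')ᶜ,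
      ent_mergeXZ (jointPMF p q) (I ∪ I') (I ∪ I') (I ∪ I')ᶜ,
      ent_mergeZ (jointPMF p q) I (I ∪ I')ᶜ,
      ent_mergeXZ (jointPMF p q) I I (I ∪ I')ᶜ,
      ent_mergeZ (jointPMF p q) I' (I ∪ (I ∪ I')ᶜ),
      ent_mergeXZ (jointPMF p q) I' I' (I ∪ (I ∪ I')ᶜ)]
  rw [show (I ∪ I') ∪ (I ∪ I')ᶜ = (I ∪ I')ᶜ ∪ (I ∪ I') from Finset.union_comm _ _]
  rw [show I ∪ (I ∪ I')ᶜ = (I ∪ I')ᶜ ∪ I from Finset.union_comm _ _]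
  rw [show I' ∪ ((I ∪ I')ᶜ ∪ I) = ((I ∪ I')ᶜ ∪ I) ∪ I' from Finset.union_comm _ _]
  have hBD1 : Disjoint ((I ∪ I')ᶜ) (I ∪ I') := disjoint_compl_left
  have hBD2 : Disjoint ((I ∪ I')ᶜ) I :=
    hBD1.mono_right Finset.subset_union_left
  have hBD2' : Disjoint ((I ∪ I')ᶜ) I' :=
    hBD1.mono_right Finset.subset_union_right
  have hBD3 : Disjoint ((I ∪ I')ᶜ ∪ I) I' :=
    Finset.disjoint_union_left.mpr ⟨hBD2', hdisj⟩
  rw [step_lemma p q hq1 (subset_refl (I ∪ I')) hBD1,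
      step_lemma p q hq1 (subset_refl I) hBD2,
      step_lemma p q hq1 (subset_refl I') hBD3]
  rw [show ((I ∪ I')ᶜ ∪ I) ∪ I' = (I ∪ I')ᶜ ∪ (I ∪ I') from Finset.union_assoc _ _ _]
  rw [FD_union p q hq1 hdisj]
  ring

end Statement
end

section
/- For a polyhedron in ℝ^M defined by 2^M − 1 inequality constraints indexed by nonempty subsets of {1,...,M}, if at every point at most the constraints corresponding to a chain (totally ordered family) of subsets can be simultaneously active, then the polyhedron has at most M! vertices (extreme points). -/
open Finset

/-- Uniqueness: the equations indexed by a full flag determine the point. -/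
lemma flag_uniq {M : ℕ} (σ : Fin M → Fin M) (hσ : Function.Bijective σ)
    (v : Fin M → ℝ)
    (h : ∀ i, ∑ j ∈ univ.filter (fun j => σ j ≤ σ i), v j = 0) :
    v = 0 := by
  classical
  have claim : ∀ k, k < M → ∑ j ∈ univ.filter (fun j => (σ j).val ≤ k), v j = 0 := by
    intro k hk
    obtain ⟨i, hi⟩ := hσ.2 ⟨k, hk⟩
    have hset : univ.filter (fun j => (σ j).val ≤ k) = univ.filter (fun j => σ j ≤ σ i) := by
      apply filter_congr; intro j _
      simp [hi, Fin.le_def]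
    rw [hset]; exact h i
  funext j
  have hzero : ∑ l ∈ univ.filter (fun l => (σ l).val < (σ j).val), v l = 0 := by
    rcases Nat.eq_zero_or_pos (σ j).val with h0 | hpos
    · rw [h0]; simp
    · have hset : univ.filter (fun l => (σ l).val < (σ j).val)
          = univ.filter (fun l => (σ l).val ≤ (σ j).val - 1) := by
        apply filter_congr; intro l _
        constructor <;> intro hl <;> [skip; skip] <;> simp_all <;> omega
      rw [hset]
      exact claim _ (lt_of_le_of_lt (Nat.sub_le _ _) (σ j).isLt)
  have key : univ.filter (fun l => σ l ≤ σ j)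
      = insert j (univ.filter (fun l => (σ l).val < (σ j).val)) := by
    ext l
    simp only [mem_insert, mem_filter, mem_univ, true_and, Fin.le_def]
    constructor
    · intro hle
      rcases eq_or_lt_of_le hle with heq | hlt
      · left; exact hσ.1 (Fin.ext heq)
      · right; exact hlt
    · rintro (rfl | hlt)
      · exact le_refl _
      · exact le_of_lt hlt
  have hj : j ∉ univ.filter (fun l => (σ l).val < (σ j).val) := by simp
  have hh := h j
  rw [key, sum_insert hj, hzero, add_zero] at hh
  simpa using hh

/-- Every extreme point gives rise to a full flag of active constraints. -/
lemma exists_sigma {M : ℕ} (f : Finset (Fin M) → ℝ) (P : Set (Fin M → ℝ))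
    (hP : P = {R | ∀ I : Finset (Fin M), I.Nonempty → f I ≤ ∑ i ∈ I, R i})
    (hchain : ∀ R ∈ P, ∀ I I' : Finset (Fin M), I.Nonempty → I'.Nonempty →
      (∑ i ∈ I, R i = f I) → (∑ i ∈ I', R i = f I') → I ≠ I' → I ⊂ I' ∨ I' ⊂ I)
    (R : Fin M → ℝ) (hR : R ∈ P.extremePoints ℝ) :
    ∃ σ : Fin M → Fin M, Function.Bijective σ ∧
      ∀ i, ∑ j ∈ univ.filter (fun j => σ j ≤ σ i), R j
        = f (univ.filter (fun j => σ j ≤ σ i)) := by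
  classical
  have hRP : R ∈ P := hR.1
  have hRP' : ∀ I : Finset (Fin M), I.Nonempty → f I ≤ ∑ i ∈ I, R i := by
    rw [hP] at hRP; exact hRP
  -- Active constraints
  set Act : Finset (Fin M) → Prop := fun I => I.Nonempty ∧ ∑ i ∈ I, R i = f I with hAct
  have chain2 : ∀ I I', Act I → Act I' → I ⊆ I' ∨ I' ⊆ I := by
    intro I I' hI hI'
    by_cases hne : I = I'
    · left; exact hne.le
    · rcases hchain R hRP I I' hI.1 hI'.1 hI.2 hI'.2 hne with h | h
      · left; exact h.subset
      · right; exact h.subset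
  -- spanning property of active constraints
  have span : ∀ v : Fin M → ℝ, (∀ I, Act I → ∑ i ∈ I, v i = 0) → v = 0 := by
    intro v hv
    by_contra hv0
    set g : Finset (Fin M) → ℝ := fun I =>
      if I.Nonempty ∧ ∑ i ∈ I, R i ≠ f I then
        ((∑ i ∈ I, R i) - f I) / (|∑ i ∈ I, v i| + 1) else 1 with hg
    have hgI : ∀ J, g J = if J.Nonempty ∧ ∑ i ∈ J, R i ≠ f J then
        ((∑ i ∈ J, R i) - f J) / (|∑ i ∈ J, v i| + 1) else 1 := fun J => rfl
    have hgpos : ∀ I, 0 < g I := by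
      intro I
      rw [hgI]
      by_cases h : I.Nonempty ∧ ∑ i ∈ I, R i ≠ f I
      · rw [if_pos h]
        apply div_pos
        · have := hRP' I h.1
          have := h.2
          cases lt_or_eq_of_le (hRP' I h.1) with
          | inl hlt => linarith
          | inr heq => exact absurd heq.symm h.2
        · have := abs_nonneg (∑ i ∈ I, v i); linarith
      · rw [if_neg h]; norm_num
    have hune : (univ : Finset (Finset (Fin M))).Nonempty := ⟨∅, mem_univ ∅⟩
    set ε : ℝ := univ.inf' hune g with hε
    have hεpos : 0 < ε := by
      rw [hε, Finset.lt_inf'_iff]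
      intro I _; exact hgpos I
    have hεle : ∀ I, ε ≤ g I := fun I => Finset.inf'_le g (mem_univ I)
    -- perturbation stays in P
    have hpert : ∀ c : ℝ, |c| ≤ ε → (fun i => R i + c * v i) ∈ P := by
      intro c hc
      rw [hP]
      intro I hI
      have hsum : ∑ i ∈ I, (R i + c * v i) = (∑ i ∈ I, R i) + c * ∑ i ∈ I, v i := by
        rw [Finset.sum_add_distrib, Finset.mul_sum]
      rw [hsum]
      by_cases hact : ∑ i ∈ I, R i = f I
      · have := hv I ⟨hI, hact⟩
        rw [this, mul_zero, add_zero, hact]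
      · have hge : f I ≤ ∑ i ∈ I, R i := hRP' I hI
        have hslack : 0 < (∑ i ∈ I, R i) - f I := by
          cases lt_or_eq_of_le hge with
          | inl h => linarith
          | inr h => exact absurd h.symm hact
        set a : ℝ := |∑ i ∈ I, v i| with ha
        have ha0 : 0 ≤ a := abs_nonneg _
        have hgI2 : g I = ((∑ i ∈ I, R i) - f I) / (a + 1) := by
          rw [hgI I, if_pos ⟨hI, hact⟩]
        have hεI : ε ≤ ((∑ i ∈ I, R i) - f I) / (a + 1) := hgI2 ▸ hεle I
        have hεa : ε * (a + 1) ≤ (∑ i ∈ I, R i) - f I := by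
          rw [← le_div_iff₀ (by linarith : (0:ℝ) < a + 1)]
          exact hεI
        have habs : |c * ∑ i ∈ I, v i| ≤ ε * a := by
          rw [abs_mul]
          exact mul_le_mul hc (le_refl a) ha0 (le_of_lt hεpos)
        have h1 : -(ε * a) ≤ c * ∑ i ∈ I, v i := neg_le_of_abs_le habs
        nlinarith [hεpos.le]
    -- contradiction with extremality
    set x₁ : Fin M → ℝ := fun i => R i + (-ε) * v i with hx₁
    set x₂ : Fin M → ℝ := fun i => R i + ε * v i with hx₂
    have hx₁P : x₁ ∈ P := hpert (-ε) (by rw [abs_neg, abs_of_pos hεpos])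
    have hx₂P : x₂ ∈ P := hpert ε (by rw [abs_of_pos hεpos])
    have hseg : R ∈ openSegment ℝ x₁ x₂ := by
      refine ⟨1/2, 1/2, by norm_num, by norm_num, by norm_num, ?_⟩
      funext i
      simp only [hx₁, hx₂, Pi.add_apply, Pi.smul_apply, smul_eq_mul]
      ring
    have := hR.2 hx₁P hx₂P hseg
    have hvz : v = 0 := by
      funext i
      show v i = 0
      have hci := congrFun this i
      simp only [hx₁] at hci
      have h1 : ε * v i = 0 := by
        have : -(ε * v i) = 0 := by
          have := hci
          nlinarith [hci]
        linarith
      rcases mul_eq_zero.mp h1 with h | h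
      · exact absurd h (ne_of_gt hεpos)
      · exact h
    exact hv0 hvz
  -- minimal active set containing each index
  have hmin : ∀ i : Fin M, ∃ I, Act I ∧ i ∈ I ∧ ∀ J, Act J → i ∈ J → I ⊆ J := by
    intro i
    have hBi : ∃ I, Act I ∧ i ∈ I := by
      by_contra hc
      push_neg at hc
      have : (Pi.single i 1 : Fin M → ℝ) = 0 := by
        apply span
        intro I hI
        have hiI : i ∉ I := hc I hI
        have hz : ∀ j ∈ I, (Pi.single i 1 : Fin M → ℝ) j = 0 := by
          intro j hj
          rw [Pi.single_apply, if_neg]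
          intro h; exact hiI (h ▸ hj)
        exact Finset.sum_eq_zero hz
      have := congrFun this i
      rw [Pi.single_eq_same] at this
      norm_num at this
    set T : Finset (Finset (Fin M)) :=
      univ.filter (fun I => Act I ∧ i ∈ I) with hT
    have hTne : T.Nonempty := by
      obtain ⟨I, hI1, hI2⟩ := hBi
      exact ⟨I, mem_filter.mpr ⟨mem_univ _, hI1, hI2⟩⟩
    obtain ⟨I, hIT, hImin⟩ := Finset.exists_min_image T Finset.card hTne
    rw [hT, mem_filter] at hIT
    refine ⟨I, hIT.2.1, hIT.2.2, ?_⟩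
    intro J hJ hiJ
    have hJT : J ∈ T := mem_filter.mpr ⟨mem_univ _, hJ, hiJ⟩
    have hcard : I.card ≤ J.card := hImin J hJT
    rcases chain2 I J hIT.2.1 hJ with h | h
    · exact h
    · have : J = I := Finset.eq_of_subset_of_card_le h hcard
      exact this.ge
  choose m hmA hmi hmmin using hmin
  have key : ∀ i j, j ∈ m i ↔ (m j).card ≤ (m i).card := by
    intro i j
    constructor
    · intro h
      exact Finset.card_le_card (hmmin j (m i) (hmA i) h)
    · intro hcard
      rcases chain2 (m j) (m i) (hmA j) (hmA i) with h | h
      · exact h (hmi j)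
      · have : m i = m j := Finset.eq_of_subset_of_card_le h hcard
        rw [this]; exact hmi j
  have hcard1 : ∀ i, 1 ≤ (m i).card := by
    intro i
    exact Finset.card_pos.mpr ⟨i, hmi i⟩
  have hcardM : ∀ i, (m i).card ≤ M := by
    intro i
    have := Finset.card_le_univ (m i)
    simpa using this
  set σ : Fin M → Fin M := fun i => ⟨(m i).card - 1, by
    have := hcard1 i; have := hcardM i; omega⟩ with hσdef
  have m_eq : ∀ i, m i = univ.filter (fun j => σ j ≤ σ i) := by
    intro i
    ext j
    rw [mem_filter]
    simp only [mem_univ, true_and, hσdef, Fin.mk_le_mk]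
    rw [key i j]
    have h1 := hcard1 i
    have h2 := hcard1 j
    omega
  -- m injective
  have hminj : Function.Injective m := by
    intro i j hm
    by_contra hne
    have : ((Pi.single i 1 : Fin M → ℝ) - Pi.single j 1) = 0 := by
      apply span
      intro I hI
      have hiff : i ∈ I ↔ j ∈ I := by
        constructor
        · intro h
          exact (hm ▸ hmmin i I hI h) (hmi j)
        · intro h
          exact (hm ▸ hmmin j I hI h : m i ⊆ I) (hmi i)
      have hsub : ∑ k ∈ I, ((Pi.single i 1 - Pi.single j 1 : Fin M → ℝ)) k
          = (∑ k ∈ I, (Pi.single i 1 : Fin M → ℝ) k)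
            - ∑ k ∈ I, (Pi.single j 1 : Fin M → ℝ) k := by
        rw [← Finset.sum_sub_distrib]; rfl
      rw [hsub]
      have e1 : ∑ k ∈ I, (Pi.single i 1 : Fin M → ℝ) k = if i ∈ I then 1 else 0 := by
        simp [Pi.single_apply]
      have e2 : ∑ k ∈ I, (Pi.single j 1 : Fin M → ℝ) k = if j ∈ I then 1 else 0 := by
        simp [Pi.single_apply]
      rw [e1, e2]
      by_cases h : i ∈ I
      · rw [if_pos h, if_pos (hiff.1 h)]; ring
      · rw [if_neg h, if_neg (fun hj => h (hiff.2 hj))]; ring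
    have hci := congrFun this i
    simp only [Pi.sub_apply, Pi.single_eq_same, Pi.zero_apply, Pi.single_apply] at hci
    rw [if_neg hne] at hci
    norm_num at hci
  have hσinj : Function.Injective σ := by
    intro i j hσij
    apply hminj
    have hcc : (m i).card = (m j).card := by
      have := congrArg Fin.val hσij
      simp only [hσdef] at this
      have h1 := hcard1 i
      have h2 := hcard1 j
      omega
    rcases chain2 (m i) (m j) (hmA i) (hmA j) with h | h
    · exact Finset.eq_of_subset_of_card_le h hcc.ge
    · exact (Finset.eq_of_subset_of_card_le h hcc.le).symm
  refine ⟨σ, Finite.injective_iff_bijective.mp hσinj, ?_⟩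
  intro i
  rw [← m_eq i]
  exact (hmA i).2

/-- A polyhedron in `ℝ^M` cut out by the `2^M − 1` constraints `Σ_{i∈I} R_i ≥ f(I)`
(for nonempty `I ⊆ {1,...,M}`), such that at every point the simultaneously active
constraints correspond to a chain of subsets, has at most `M!` extreme points. -/
theorem stmt9 (M : ℕ) (f : Finset (Fin M) → ℝ) (P : Set (Fin M → ℝ))
    (hP : P = {R | ∀ I : Finset (Fin M), I.Nonempty → f I ≤ ∑ i ∈ I, R i})
    (hchain : ∀ R ∈ P, ∀ I I' : Finset (Fin M), I.Nonempty → I'.Nonempty →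
      (∑ i ∈ I, R i = f I) → (∑ i ∈ I', R i = f I') → I ≠ I' → I ⊂ I' ∨ I' ⊂ I) :
    (P.extremePoints ℝ).Finite ∧ (P.extremePoints ℝ).ncard ≤ Nat.factorial M := by
  classical
  set S := P.extremePoints ℝ with hS
  have hex : ∀ x : S, ∃ σ : Fin M → Fin M, Function.Bijective σ ∧
      ∀ i, ∑ j ∈ univ.filter (fun j => σ j ≤ σ i), (x : Fin M → ℝ) j
        = f (univ.filter (fun j => σ j ≤ σ i)) :=
    fun x => exists_sigma f P hP hchain x x.2
  choose σF hbij hact using hex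
  set F : S → Equiv.Perm (Fin M) := fun x => Equiv.ofBijective (σF x) (hbij x) with hF
  have hFinj : Function.Injective F := by
    intro x y hxy
    have hσ : σF x = σF y := by
      funext a
      have := congrArg (fun e : Equiv.Perm (Fin M) => e a) hxy
      simpa [hF] using this
    have hv : ((x : Fin M → ℝ) - (y : Fin M → ℝ)) = 0 := by
      apply flag_uniq (σF x) (hbij x)
      intro i
      have h1 := hact x i
      have h2 := hact y i
      rw [hσ] at h1 ⊢
      simp only [Pi.sub_apply]
      rw [Finset.sum_sub_distrib, h1, h2, sub_self]
    have : (x : Fin M → ℝ) = (y : Fin M → ℝ) := by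
      funext i
      have := congrFun hv i
      simp only [Pi.sub_apply, Pi.zero_apply] at this
      linarith
    exact Subtype.ext this
  have hfin : Finite S := Finite.of_injective F hFinj
  constructor
  · exact Set.finite_coe_iff.mp hfin
  · have hle := Nat.card_le_card_of_injective F hFinj
    have hperm : Nat.card (Equiv.Perm (Fin M)) = Nat.factorial M := by
      simp [Nat.card_eq_fintype_card, Fintype.card_perm]
    rw [hperm, Nat.card_coe_set_eq] at hle
    exact hle
end
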